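/- In the canonical game G(X₀): for any play (α,δ,ω)∈P, any formula ¬(φ→B_C^D φ) ∈ hd(ω), and any action profile s∈Δ^D, there exists a play (α',δ',ω')∈P such that α∼_C α', s =_D δ', and φ∈hd(ω'). -/

import Mathlib

namespace DutyToWarn

/-- The language Φ: propositional variables, negation, implication,
distributed knowledge `K_C φ`, and second-order blameworthiness `B_C^D φ`. -/
inductive Formula (Agent V : Type) : Type
  | var : V → Formula Agent V
  | neg : Formula Agent V → Formula Agent V
  | imp : Formula Agent V → Formula Agent V → Formula Agent V
  | know : Set Agent → Formula Agent V → Formula Agent V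
  | blame : Set Agent → Set Agent → Formula Agent V → Formula Agent V

variable {Agent V B : Type}

namespace Formula

/-- φ ∨ ψ is defined through ¬ and → in the usual way: ¬φ → ψ. -/
def disj (φ ψ : Formula Agent V) : Formula Agent V := imp (neg φ) ψ

/-- φ ∧ ψ is defined through ¬ and → in the usual way: ¬(φ → ¬ψ). -/
def conj (φ ψ : Formula Agent V) : Formula Agent V := neg (imp φ (neg ψ))

/-- φ ↔ ψ is defined as (φ → ψ) ∧ (ψ → φ). -/
def biimp (φ ψ : Formula Agent V) : Formula Agent V := conj (imp φ ψ) (imp ψ φ)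

/-- K̄_C φ abbreviates ¬ K_C ¬ φ. -/
def dknow (C : Set Agent) (φ : Formula Agent V) : Formula Agent V := neg (know C (neg φ))

end Formula

/-- The Boolean constant ⊥, defined through ¬ and →. -/
def falsum [Inhabited V] : Formula Agent V :=
  Formula.neg (Formula.imp (Formula.var default) (Formula.var default))

/-- The disjunction χ₁ ∨ … ∨ χₙ of a list of formulas; for n = 0 it is ⊥. -/
def bigOr [Inhabited V] : List (Formula Agent V) → Formula Agent V
  | [] => falsum
  | [φ] => φ
  | φ :: ψ :: l => φ.disj (bigOr (ψ :: l))

/-- A propositional valuation: any assignment of truth values to formulas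
that respects negation and implication (treating K- and B-formulas as atoms). -/
def IsPropValuation (v : Formula Agent V → Prop) : Prop :=
  (∀ φ : Formula Agent V, v φ.neg ↔ ¬ v φ) ∧
    ∀ φ ψ : Formula Agent V, v (φ.imp ψ) ↔ (v φ → v ψ)

/-- A propositional tautology in the language Φ. -/
def Tautology (φ : Formula Agent V) : Prop :=
  ∀ v : Formula Agent V → Prop, IsPropValuation v → v φ

/-- ⊢ φ : provability from the axioms using Modus Ponens and Necessitation. -/
inductive Provable : Formula Agent V → Prop
  | taut {φ : Formula Agent V} : Tautology φ → Provable φ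
  | truthK {C : Set Agent} {φ : Formula Agent V} :
      Provable ((Formula.know C φ).imp φ)
  | truthB {C D : Set Agent} {φ : Formula Agent V} :
      Provable ((Formula.blame C D φ).imp φ)
  | distr {C : Set Agent} {φ ψ : Formula Agent V} :
      Provable ((Formula.know C (φ.imp ψ)).imp ((Formula.know C φ).imp (Formula.know C ψ)))
  | negIntro {C : Set Agent} {φ : Formula Agent V} :
      Provable ((Formula.know C φ).neg.imp (Formula.know C (Formula.know C φ).neg))
  | monoK {C E : Set Agent} {φ : Formula Agent V} (h : C ⊆ E) :
      Provable ((Formula.know C φ).imp (Formula.know E φ))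
  | monoB {C D E F : Set Agent} {φ : Formula Agent V} (h1 : C ⊆ E) (h2 : D ⊆ F) :
      Provable ((Formula.blame C D φ).imp (Formula.blame E F φ))
  | noneToAct {C : Set Agent} {φ : Formula Agent V} :
      Provable (Formula.neg (Formula.blame C ∅ φ))
  | jointResp {C D E F : Set Agent} {φ ψ : Formula Agent V} (h : D ∩ F = ∅) :
      Provable (((Formula.dknow C (Formula.blame C D φ)).conj
        (Formula.dknow E (Formula.blame E F ψ))).imp
        ((φ.disj ψ).imp (Formula.blame (C ∪ E) (D ∪ F) (φ.disj ψ))))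
  | strictCond {C D : Set Agent} {φ ψ : Formula Agent V} :
      Provable ((Formula.know C (φ.imp ψ)).imp
        ((Formula.blame C D ψ).imp (φ.imp (Formula.blame C D φ))))
  | introB {C D : Set Agent} {φ : Formula Agent V} :
      Provable ((Formula.blame C D φ).imp (Formula.know C (φ.imp (Formula.blame C D φ))))
  | mp {φ ψ : Formula Agent V} : Provable (φ.imp ψ) → Provable φ → Provable ψ
  | nec {C : Set Agent} {φ : Formula Agent V} : Provable φ → Provable (Formula.know C φ)

/-- X ⊢ φ : provability from the theorems of the system together with the
additional hypotheses X, using only Modus Ponens. -/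
inductive ProvableFrom (X : Set (Formula Agent V)) : Formula Agent V → Prop
  | hyp {φ : Formula Agent V} (h : φ ∈ X) : ProvableFrom X φ
  | thm {φ : Formula Agent V} (h : Provable φ) : ProvableFrom X φ
  | mp {φ ψ : Formula Agent V} (h1 : ProvableFrom X (φ.imp ψ)) (h2 : ProvableFrom X φ) :
      ProvableFrom X ψ

/-- A game (Definition 1). -/
structure Game (Agent V : Type) where
  I : Type
  Δ : Type
  Ω : Type
  sim : Agent → I → I → Prop
  sim_equiv : ∀ a : Agent, Equivalence (sim a)
  P : Set (I × (Agent → Δ) × Ω)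
  play_exists : ∀ (α : I) (δ : Agent → Δ), ∃ ω : Ω, (α, δ, ω) ∈ P
  π : V → Set (I × (Agent → Δ) × Ω)
  π_sub : ∀ p : V, π p ⊆ P

/-- α ∼_C α' : indistinguishability by a coalition. -/
def Game.simC (G : Game Agent V) (C : Set Agent) (α α' : G.I) : Prop :=
  ∀ a ∈ C, G.sim a α α'

/-- Satisfiability (α,δ,ω) ⊩ φ (Definition 2). -/
def Game.Sat (G : Game Agent V) :
    Formula Agent V → (G.I × (Agent → G.Δ) × G.Ω) → Prop
  | Formula.var p, x => x ∈ G.π p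
  | Formula.neg φ, x => ¬ G.Sat φ x
  | Formula.imp φ ψ, x => G.Sat φ x → G.Sat ψ x
  | Formula.know C φ, x => ∀ x' ∈ G.P, G.simC C x.1 x'.1 → G.Sat φ x'
  | Formula.blame C D φ, x => G.Sat φ x ∧
      ∃ s : Agent → G.Δ, ∀ x' ∈ G.P, G.simC C x.1 x'.1 →
        (∀ a ∈ D, s a = x'.2.1 a) → ¬ G.Sat φ x'

/-- A set of formulas is consistent if no contradiction is derivable from it. -/
def Consistent (X : Set (Formula Agent V)) : Prop :=
  ¬ ∃ φ : Formula Agent V, ProvableFrom X φ ∧ ProvableFrom X φ.neg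

/-- A maximal consistent set: consistent with no proper consistent extension. -/
def MaxConsistent (X : Set (Formula Agent V)) : Prop :=
  Consistent X ∧ ∀ Y : Set (Formula Agent V), X ⊆ Y → Consistent Y → Y = X

/-- One step (Cᵢ,bᵢ),Xᵢ of a sequence in the set of outcomes of the canonical game. -/
abbrev Step (Agent V B : Type) : Type := Set Agent × B × Set (Formula Agent V)

/-- Validity of a sequence X₀,(C₁,b₁),X₁,…,(Cₙ,bₙ),Xₙ : each Xᵢ is maximal
consistent and {φ | K_{Cᵢ} φ ∈ X_{i-1}} ⊆ Xᵢ. -/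
def ValidSeq (X₀ : Set (Formula Agent V)) : List (Step Agent V B) → Prop
  | [] => True
  | (C, _, X) :: l =>
      MaxConsistent X ∧ (∀ φ : Formula Agent V, Formula.know C φ ∈ X₀ → φ ∈ X) ∧
        ValidSeq X l

/-- The set Ω of outcomes of the canonical game G(X₀): valid sequences starting at X₀
(the sequence of steps after X₀ is recorded). -/
def COutcome (X₀ : Set (Formula Agent V)) (B : Type) : Type :=
  {l : List (Step Agent V B) // ValidSeq X₀ l}

/-- The last maximal consistent set of a sequence. -/
def hdSeq (X₀ : Set (Formula Agent V)) : List (Step Agent V B) → Set (Formula Agent V)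
  | [] => X₀
  | (_, _, X) :: l => hdSeq X l

/-- hd(ω) : the last maximal consistent set of the outcome ω. -/
def chd {X₀ : Set (Formula Agent V)} (ω : COutcome X₀ B) : Set (Formula Agent V) :=
  hdSeq X₀ ω.1

/-- ω ∼_a ω' in the Tree of Knowledge: all edges along the unique path between
ω and ω' are labeled with agent a, i.e. there is a common ancestor w such that
every edge from w down to ω and from w down to ω' is labeled with a. -/
def csimA {X₀ : Set (Formula Agent V)} (a : Agent) (u v : COutcome X₀ B) : Prop :=
  ∃ w t t' : List (Step Agent V B),
    u.1 = w ++ t ∧ v.1 = w ++ t' ∧ (∀ s ∈ t, a ∈ s.1) ∧ (∀ s ∈ t', a ∈ s.1)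

/-- ω ∼_C ω' iff ω ∼_a ω' for each a ∈ C. -/
def csimC {X₀ : Set (Formula Agent V)} (C : Set Agent) (u v : COutcome X₀ B) : Prop :=
  ∀ a ∈ C, csimA a u v

/-- The relation ∼_𝒜 on outcomes. -/
def crel (X₀ : Set (Formula Agent V)) (B : Type) : COutcome X₀ B → COutcome X₀ B → Prop :=
  csimC (Set.univ : Set Agent)

/-- The set I of initial states of the canonical game: I = Ω/∼_𝒜. -/
def CI (X₀ : Set (Formula Agent V)) (B : Type) : Type :=
  Quot (crel X₀ B)

/-- The equivalence class of an outcome. -/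
def ctoI {X₀ : Set (Formula Agent V)} (u : COutcome X₀ B) : CI X₀ B :=
  Quot.mk (crel X₀ B) u

/-- The relation α ∼_C α' on I, induced on representatives. -/
def IsimC {X₀ : Set (Formula Agent V)} (C : Set Agent) (α α' : CI X₀ B) : Prop :=
  ∃ u v : COutcome X₀ B, ctoI u = α ∧ ctoI v = α' ∧ csimC C u v

/-- The domain of actions of the canonical game: Δ = {(φ,C,ω)}. -/
abbrev CAct (X₀ : Set (Formula Agent V)) (B : Type) : Type :=
  Formula Agent V × Set Agent × COutcome X₀ B

/-- Triples (α, δ, ω) over the canonical game. -/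
abbrev CPlay (X₀ : Set (Formula Agent V)) (B : Type) : Type :=
  CI X₀ B × (Agent → CAct X₀ B) × COutcome X₀ B

/-- The set P of plays of the canonical game (Definition 13). -/
def CP (X₀ : Set (Formula Agent V)) (B : Type) : Set (CPlay X₀ B) :=
  {x | ctoI x.2.2 = x.1 ∧
    ∀ (v : COutcome X₀ B) (C D : Set Agent) (ψ : Formula Agent V),
      Formula.dknow C (Formula.blame C D ψ) ∈ chd v →
      (∀ a ∈ D, x.2.1 a = (ψ, C, v)) →
      csimC C x.2.2 v →
      Formula.neg ψ ∈ chd x.2.2}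

/-- π(p) in the canonical game. -/
def Cπ (X₀ : Set (Formula Agent V)) (B : Type) (p : V) : Set (CPlay X₀ B) :=
  {x | x ∈ CP X₀ B ∧ Formula.var p ∈ chd x.2.2}

/-- Satisfiability in the canonical game G(X₀) (Definition 2 instantiated). -/
def CSat (X₀ : Set (Formula Agent V)) (B : Type) :
    Formula Agent V → CPlay X₀ B → Prop
  | Formula.var p, x => x ∈ Cπ X₀ B p
  | Formula.neg φ, x => ¬ CSat X₀ B φ x
  | Formula.imp φ ψ, x => CSat X₀ B φ x → CSat X₀ B ψ x
  | Formula.know C φ, x => ∀ x' ∈ CP X₀ B, IsimC C x.1 x'.1 → CSat X₀ B φ x'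
  | Formula.blame C D φ, x => CSat X₀ B φ x ∧
      ∃ s : Agent → CAct X₀ B, ∀ x' ∈ CP X₀ B, IsimC C x.1 x'.1 →
        (∀ a ∈ D, s a = x'.2.1 a) → ¬ CSat X₀ B φ x'

/-!
The new play lives at a fresh child `ω' = ω,(C,b),Y` of `ω`, where `Y` is a maximal consistent
extension of `Γ = {χ | K_C χ ∈ hd ω} ∪ {φ} ∪ {¬ψ | (ψ,E,v) a threat}`; a threat is an action
`(ψ,E,v)` of `s` whose fibre `F ⊆ D` satisfies `E ⊆ C`, `ω ∼_E v` and `K̄_E B_E^F ψ ∈ hd v`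
(hence, by introspection along the path, `K̄_E B_E^F ψ ∈ hd ω`).

`Γ` is consistent: otherwise `K_C(φ → ψ₁ ∨ … ∨ ψₙ) ∈ hd ω`, so some `ψⱼ ∈ hd ω`, hence
`B ψⱼ ∈ hd ω`, and Joint Responsibility over the pairwise disjoint fibres gives
`B_C^D(ψ₁ ∨ … ∨ ψₙ) ∈ hd ω`; Strict Conditional then yields `φ → B_C^D φ`, a contradiction.

Since `|𝒜| < |ℬ|`, the label `b` can avoid the labels of all outcomes of `s` right below `ω`.
Then every `v` named by `s` lies outside the subtree of `ω'`, so `ω' ∼_E v` forces `E ⊆ C` and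
`ω ∼_E v`: condition (ii) of `P` at `ω'` only ever asks for the negation of a threat.
-/

open Formula Function

universe u

theorem exists_forall_not_of_mk_lt {α β : Type u} (h : Cardinal.mk α < Cardinal.mk β)
    (R : α → β → Prop) (hR : ∀ a b b', R a b → R a b' → b = b') : ∃ b, ∀ a, ¬ R a b := by
  by_contra! hall
  choose g hg using hall
  have hg_inj : Injective g := fun b b' hbb' =>
    hR _ _ _ (hg b) (by rw [hbb']; exact hg b')
  exact (Cardinal.mk_le_of_injective hg_inj).not_gt h

theorem Provable.of_tautology_imp {φ ψ : Formula Agent V} (ht : Tautology (φ.imp ψ))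
    (h : Provable φ) : Provable ψ :=
  (Provable.taut ht).mp h

theorem Provable.know_imp_know {C : Set Agent} {φ ψ : Formula Agent V}
    (h : Provable (φ.imp ψ)) : Provable ((know C φ).imp (know C ψ)) :=
  Provable.distr.mp (Provable.nec h)

theorem IsPropValuation.foldl_disj {ι : Type*} {v : Formula Agent V → Prop}
    (hv : IsPropValuation v) (ψ : ι → Formula Agent V) (L : List ι) (χ : Formula Agent V) :
    v (L.foldl (fun θ i => θ.disj (ψ i)) χ) ↔ v χ ∨ ∃ i ∈ L, v (ψ i) := by
  induction L generalizing χ with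
  | nil => simp
  | cons i L ih =>
    rw [List.foldl_cons, ih]
    simp only [Formula.disj, hv.1, hv.2, List.mem_cons, exists_eq_or_imp]
    tauto

namespace ProvableFrom

variable {X Y : Set (Formula Agent V)} {φ ψ : Formula Agent V}

theorem mono (h : ProvableFrom X φ) (hXY : X ⊆ Y) : ProvableFrom Y φ := by
  induction h with
  | hyp h => exact hyp (hXY h)
  | thm h => exact thm h
  | mp _ _ ih₁ ih₂ => exact mp ih₁ ih₂

theorem trans (h : ProvableFrom X φ) (hXY : ∀ ψ ∈ X, ProvableFrom Y ψ) :
    ProvableFrom Y φ := by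
  induction h with
  | hyp h => exact hXY _ h
  | thm h => exact thm h
  | mp _ _ ih₁ ih₂ => exact mp ih₁ ih₂

theorem of_tautology_imp (ht : Tautology (φ.imp ψ)) (h : ProvableFrom X φ) :
    ProvableFrom X ψ :=
  mp (thm (Provable.taut ht)) h

theorem exists_finite (h : ProvableFrom X φ) : ∃ Y ⊆ X, Y.Finite ∧ ProvableFrom Y φ := by
  induction h with
  | @hyp φ h => exact ⟨{φ}, Set.singleton_subset_iff.2 h, Set.finite_singleton φ, hyp rfl⟩
  | thm h => exact ⟨∅, Set.empty_subset X, Set.finite_empty, thm h⟩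
  | mp _ _ ih₁ ih₂ =>
    obtain ⟨Y₁, hY₁, hfin₁, h₁⟩ := ih₁
    obtain ⟨Y₂, hY₂, hfin₂, h₂⟩ := ih₂
    exact ⟨Y₁ ∪ Y₂, Set.union_subset hY₁ hY₂, hfin₁.union hfin₂,
      mp (h₁.mono Set.subset_union_left) (h₂.mono Set.subset_union_right)⟩

theorem deduction (h : ProvableFrom (insert ψ X) φ) : ProvableFrom X (ψ.imp φ) := by
  induction h with
  | hyp h =>
    rcases h with rfl | h
    · exact thm (Provable.taut fun v hv => by simp only [hv.2]; tauto)
    · exact of_tautology_imp (fun v hv => by simp only [hv.2]; tauto) (hyp h)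
  | thm h => exact of_tautology_imp (fun v hv => by simp only [hv.2]; tauto) (thm h)
  | mp _ _ ih₁ ih₂ =>
    exact mp (of_tautology_imp (fun v hv => by simp only [hv.2]; tauto) ih₁) ih₂

theorem neg_of_not_consistent_insert (h : ¬ Consistent (insert ψ X)) :
    ProvableFrom X ψ.neg := by
  obtain ⟨θ, h₁, h₂⟩ := not_not.1 h
  exact mp (of_tautology_imp (fun v hv => by simp only [hv.1, hv.2]; tauto) (deduction h₁))
    (deduction h₂)

end ProvableFrom

theorem Consistent.mono {X Y : Set (Formula Agent V)} (hXY : X ⊆ Y) (h : Consistent Y) :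
    Consistent X :=
  fun ⟨θ, h₁, h₂⟩ => h ⟨θ, h₁.mono hXY, h₂.mono hXY⟩

theorem Consistent.of_forall_provableFrom {X Y : Set (Formula Agent V)} (h : Consistent Y)
    (hXY : ∀ ψ ∈ X, ProvableFrom Y ψ) : Consistent X :=
  fun ⟨θ, h₁, h₂⟩ => h ⟨θ, h₁.trans hXY, h₂.trans hXY⟩

theorem consistent_of_forall_finite {X : Set (Formula Agent V)}
    (h : ∀ Y ⊆ X, Y.Finite → Consistent Y) : Consistent X := by
  rintro ⟨θ, h₁, h₂⟩
  obtain ⟨Y₁, hY₁, hfin₁, h₁⟩ := h₁.exists_finite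
  obtain ⟨Y₂, hY₂, hfin₂, h₂⟩ := h₂.exists_finite
  exact h _ (Set.union_subset hY₁ hY₂) (hfin₁.union hfin₂)
    ⟨θ, h₁.mono Set.subset_union_left, h₂.mono Set.subset_union_right⟩

theorem lindenbaum {X : Set (Formula Agent V)} (h : Consistent X) :
    ∃ Y, X ⊆ Y ∧ MaxConsistent Y := by
  have hchain : ∀ c ⊆ {Y : Set (Formula Agent V) | Consistent Y}, IsChain (· ⊆ ·) c →
      c.Nonempty → ∃ ub ∈ {Y : Set (Formula Agent V) | Consistent Y}, ∀ s ∈ c, s ⊆ ub := by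
    refine fun c hc hchain hne => ⟨⋃₀ c, consistent_of_forall_finite fun Y hY hfin => ?_,
      fun s hs => Set.subset_sUnion_of_mem hs⟩
    obtain ⟨t, htc, hYt⟩ :=
      DirectedOn.exists_mem_subset_of_finite_of_subset_sUnion hne hchain.directedOn hfin hY
    exact (hc htc).mono hYt
  obtain ⟨Y, hXY, hY⟩ := zorn_subset_nonempty _ hchain X h
  exact ⟨Y, hXY, hY.1, fun Z hYZ hZ => (hY.2 hZ hYZ).antisymm hYZ⟩

namespace MaxConsistent

variable {X : Set (Formula Agent V)} {C D F : Set Agent} {φ ψ : Formula Agent V}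

theorem mem_of_provableFrom (hX : MaxConsistent X) (h : ProvableFrom X φ) : φ ∈ X := by
  by_contra hφ
  have hcons : ¬ Consistent (insert φ X) := fun hc =>
    hφ (hX.2 _ (Set.subset_insert φ X) hc ▸ Set.mem_insert φ X)
  exact hX.1 ⟨φ, h, ProvableFrom.neg_of_not_consistent_insert hcons⟩

theorem mem_of_provable (hX : MaxConsistent X) (h : Provable φ) : φ ∈ X :=
  hX.mem_of_provableFrom (ProvableFrom.thm h)

theorem neg_mem_iff (hX : MaxConsistent X) : φ.neg ∈ X ↔ φ ∉ X := by
  refine ⟨fun hn h => hX.1 ⟨φ, .hyp h, .hyp hn⟩, fun hφ => hX.mem_of_provableFrom ?_⟩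
  refine ProvableFrom.neg_of_not_consistent_insert fun hc => hφ ?_
  exact hX.2 _ (Set.subset_insert φ X) hc ▸ Set.mem_insert φ X

theorem imp_mem_iff (hX : MaxConsistent X) : φ.imp ψ ∈ X ↔ (φ ∈ X → ψ ∈ X) := by
  refine ⟨fun h hφ => hX.mem_of_provableFrom (.mp (.hyp h) (.hyp hφ)), fun h => ?_⟩
  by_cases hφ : φ ∈ X
  · exact hX.mem_of_provableFrom
      (.of_tautology_imp (fun v hv => by simp only [hv.2]; tauto) (.hyp (h hφ)))
  · exact hX.mem_of_provableFrom (.of_tautology_imp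
      (fun v hv => by simp only [hv.1, hv.2]; tauto) (.hyp (hX.neg_mem_iff.2 hφ)))

theorem mem_of_know_mem (hX : MaxConsistent X) (h : know C φ ∈ X) : φ ∈ X :=
  hX.imp_mem_iff.1 (hX.mem_of_provable Provable.truthK) h

theorem know_mem_of_provable_imp (hX : MaxConsistent X) (himp : Provable (φ.imp ψ))
    (h : know C φ ∈ X) : know C ψ ∈ X :=
  hX.imp_mem_iff.1 (hX.mem_of_provable himp.know_imp_know) h

theorem know_mem_of_provableFrom (hX : MaxConsistent X)
    (h : ProvableFrom {χ | know C χ ∈ X} φ) : know C φ ∈ X := by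
  induction h with
  | hyp h => exact h
  | thm h => exact hX.mem_of_provable (Provable.nec h)
  | mp _ _ ih₁ ih₂ =>
    exact hX.imp_mem_iff.1 (hX.imp_mem_iff.1 (hX.mem_of_provable Provable.distr) ih₁) ih₂

theorem know_neg_know_mem (hX : MaxConsistent X) (h : know C φ ∉ X) : know C (know C φ).neg ∈ X :=
  hX.imp_mem_iff.1 (hX.mem_of_provable Provable.negIntro) (hX.neg_mem_iff.2 h)

theorem know_know_mem (hX : MaxConsistent X) (h : know C φ ∈ X) : know C (know C φ) ∈ X := by
  have hdual : (know C (know C φ).neg) ∉ X := fun hk =>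
    hX.neg_mem_iff.1 (hX.mem_of_know_mem hk) h
  refine hX.know_mem_of_provable_imp ?_ (hX.know_neg_know_mem hdual)
  exact .of_tautology_imp (fun v hv => by simp only [hv.1, hv.2]; tauto)
    (Provable.negIntro (φ := φ))

theorem know_mem_of_subset (hX : MaxConsistent X) (hCD : C ⊆ D) (h : know C φ ∈ X) : know D φ ∈ X :=
  hX.imp_mem_iff.1 (hX.mem_of_provable (Provable.monoK hCD)) h

theorem dknow_mem_iff (hX : MaxConsistent X) : dknow C φ ∈ X ↔ know C φ.neg ∉ X :=
  hX.neg_mem_iff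

theorem dknow_mem_of_mem (hX : MaxConsistent X) (h : φ ∈ X) : dknow C φ ∈ X :=
  hX.dknow_mem_iff.2 fun hk => hX.neg_mem_iff.1 (hX.mem_of_know_mem hk) h

theorem blame_mem_of_dknow_mem (hX : MaxConsistent X) (hK : dknow C (blame C D φ) ∈ X)
    (hφ : φ ∈ X) : blame C D φ ∈ X := by
  suffices know C (φ.imp (blame C D φ)) ∈ X from
    hX.imp_mem_iff.1 (hX.mem_of_know_mem this) hφ
  by_contra hn
  refine hX.dknow_mem_iff.1 hK (hX.know_mem_of_provable_imp ?_ (hX.know_neg_know_mem hn))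
  exact .of_tautology_imp (fun v hv => by simp only [hv.1, hv.2]; tauto) Provable.introB

theorem dknow_blame_mem_mono (hX : MaxConsistent X) (hDF : D ⊆ F) (h : dknow C (blame C D φ) ∈ X) :
    dknow C (blame C F φ) ∈ X := by
  refine hX.dknow_mem_iff.2 fun hk => hX.dknow_mem_iff.1 h
    (hX.know_mem_of_provable_imp ?_ hk)
  exact .of_tautology_imp (fun v hv => by simp only [hv.1, hv.2]; tauto)
    (Provable.monoB subset_rfl hDF)

theorem dknow_blame_empty_not_mem (hX : MaxConsistent X) : dknow C (blame C ∅ φ) ∉ X :=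
  fun h => hX.dknow_mem_iff.1 h (hX.mem_of_provable (Provable.nec Provable.noneToAct))

end MaxConsistent

section JointResponsibility

variable {ι : Type*} {X : Set (Formula Agent V)} {C D : Set Agent} {φ : Formula Agent V}
  {ψ : ι → Formula Agent V} {E F : ι → Set Agent}

theorem MaxConsistent.blame_foldl_disj_mem (hX : MaxConsistent X) (hE : ∀ i, E i ⊆ C)
    (hF : ∀ i, F i ⊆ D) (hK : ∀ i, dknow (E i) (blame (E i) (F i) (ψ i)) ∈ X)
    {L : List ι} (hL : L.Pairwise (Disjoint on F)) {χ : Formula Agent V} {C₀ D₀ : Set Agent}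
    (hχ : blame C₀ D₀ χ ∈ X) (hC₀ : C₀ ⊆ C) (hD₀ : D₀ ⊆ D) (hdisj : ∀ i ∈ L, Disjoint D₀ (F i)) :
    blame C D (L.foldl (fun θ i => θ.disj (ψ i)) χ) ∈ X := by
  induction L generalizing χ C₀ D₀ with
  | nil => exact hX.imp_mem_iff.1 (hX.mem_of_provable (Provable.monoB hC₀ hD₀)) hχ
  | cons i L ih =>
    rw [List.pairwise_cons] at hL
    have hχX : χ ∈ X := hX.imp_mem_iff.1 (hX.mem_of_provable Provable.truthB) hχ
    have hjoint := hX.mem_of_provable (Provable.jointResp (C := C₀) (E := E i) (φ := χ)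
      (ψ := ψ i) (Set.disjoint_iff_inter_eq_empty.1 (hdisj i List.mem_cons_self)))
    simp only [Formula.conj, Formula.disj, hX.neg_mem_iff, hX.imp_mem_iff] at hjoint
    refine ih hL.2 (hjoint (fun h => h (hX.dknow_mem_of_mem hχ) (hK i)) fun h => absurd hχX h)
      (Set.union_subset hC₀ (hE i)) (Set.union_subset hD₀ (hF i)) fun j hj => ?_
    exact Disjoint.union_left (hdisj j (List.mem_cons_of_mem i hj)) (hL.1 j hj)

theorem MaxConsistent.consistent_insert_image_neg (hX : MaxConsistent X)
    (hφ : (φ.imp (blame C D φ)).neg ∈ X) (hE : ∀ i, E i ⊆ C) (hF : ∀ i, F i ⊆ D)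
    (hdisj : Pairwise (Disjoint on F)) (hK : ∀ i, dknow (E i) (blame (E i) (F i) (ψ i)) ∈ X)
    (s : Finset ι) :
    Consistent (insert φ ({χ | know C χ ∈ X} ∪ (fun i => (ψ i).neg) '' s)) := by
  classical
  simp only [hX.neg_mem_iff, hX.imp_mem_iff, Classical.not_imp] at hφ
  by_contra hinc
  obtain ⟨j, hj, hψj⟩ : ∃ j ∈ s, ψ j ∈ X := by
    by_contra! hnone
    refine hinc (hX.1.mono (Set.insert_subset hφ.1 (Set.union_subset
      (fun _ => hX.mem_of_know_mem) ?_)))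
    rintro _ ⟨i, hi, rfl⟩
    exact hX.neg_mem_iff.2 (hnone i hi)
  -- starting the disjunction at `ψ j`, whose blame is known, lets Joint Responsibility add
  -- the other disjuncts one at a time
  set χ := (s.erase j).toList.foldl (fun θ i => θ.disj (ψ i)) (ψ j)
  have hψχ : ∀ v, IsPropValuation v → ∀ i ∈ s, v (ψ i) → v χ := fun v hv i hi hvi => by
    refine (hv.foldl_disj ψ _ _).2 ?_
    by_cases hij : i = j
    · exact .inl (hij ▸ hvi)
    · exact .inr ⟨i, by simpa [hij] using hi, hvi⟩
  have hBχ : blame C D χ ∈ X := by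
    refine hX.blame_foldl_disj_mem hE hF hK ?_ (hX.blame_mem_of_dknow_mem (hK j) hψj)
      (hE j) (hF j) fun i hi => hdisj ?_
    · exact (s.erase j).nodup_toList.pairwise_of_forall_ne fun i _ i' _ hne => hdisj hne
    · exact fun hji => by simp [← hji] at hi
  have hKχ : know C (φ.imp χ) ∈ X := by
    refine hX.know_mem_of_provableFrom (ProvableFrom.deduction ?_)
    refine .of_tautology_imp (φ := χ.neg.neg) (fun v hv => by simp only [hv.1, hv.2]; tauto)
      (ProvableFrom.neg_of_not_consistent_insert fun hc => hinc (hc.of_forall_provableFrom ?_))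
    rintro θ (rfl | hθ | ⟨i, hi, rfl⟩)
    · exact .hyp (Set.mem_insert_of_mem _ (Set.mem_insert _ _))
    · exact .hyp (Set.mem_insert_of_mem _ (Set.mem_insert_of_mem _ hθ))
    · refine .of_tautology_imp (φ := χ.neg) (fun v hv => ?_) (.hyp (Set.mem_insert _ _))
      simp only [hv.1, hv.2]
      exact mt (hψχ v hv i hi)
  have hstrict := hX.mem_of_provable (Provable.strictCond (C := C) (D := D) (φ := φ) (ψ := χ))
  simp only [hX.imp_mem_iff] at hstrict
  exact hφ.2 (hstrict hKχ hBχ hφ.1)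

theorem MaxConsistent.consistent_insert_range_neg (hX : MaxConsistent X)
    (hφ : (φ.imp (blame C D φ)).neg ∈ X) (hE : ∀ i, E i ⊆ C) (hF : ∀ i, F i ⊆ D)
    (hdisj : Pairwise (Disjoint on F)) (hK : ∀ i, dknow (E i) (blame (E i) (F i) (ψ i)) ∈ X) :
    Consistent (insert φ ({χ | know C χ ∈ X} ∪ Set.range fun i => (ψ i).neg)) := by
  refine consistent_of_forall_finite fun Y hY hfin => ?_
  obtain ⟨t, -, ht, hteq⟩ := Set.Finite.exists_subset_finite_image_eq (s := Set.univ)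
    (f := fun i => (ψ i).neg) (hfin.inter_of_left _)
    (by rw [Set.image_univ]; exact Set.inter_subset_right)
  refine (hX.consistent_insert_image_neg hφ hE hF hdisj hK ht.toFinset).mono fun θ hθ => ?_
  rcases hY hθ with rfl | hθK | hθψ
  · exact Set.mem_insert _ _
  · exact Set.mem_insert_of_mem _ (.inl hθK)
  · refine Set.mem_insert_of_mem _ (.inr ?_)
    rw [Set.Finite.coe_toFinset, hteq]
    exact ⟨hθ, hθψ⟩

end JointResponsibility

section CanonicalGame

variable {X₀ : Set (Formula Agent V)}

theorem hdSeq_append (X₀ : Set (Formula Agent V)) (l₁ l₂ : List (Step Agent V B)) :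
    hdSeq X₀ (l₁ ++ l₂) = hdSeq (hdSeq X₀ l₁) l₂ := by
  induction l₁ generalizing X₀ with
  | nil => rfl
  | cons e l ih => exact ih _

theorem validSeq_append {l₁ l₂ : List (Step Agent V B)} :
    ValidSeq X₀ (l₁ ++ l₂) ↔ ValidSeq X₀ l₁ ∧ ValidSeq (hdSeq X₀ l₁) l₂ := by
  induction l₁ generalizing X₀ with
  | nil => simp [ValidSeq, hdSeq]
  | cons e l ih => simp [ValidSeq, hdSeq, ih, and_assoc]

theorem MaxConsistent.hdSeq (hX₀ : MaxConsistent X₀) {l : List (Step Agent V B)}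
    (hl : ValidSeq X₀ l) : MaxConsistent (hdSeq X₀ l) := by
  induction l generalizing X₀ with
  | nil => exact hX₀
  | cons e l ih => exact ih hl.1 hl.2.2

theorem MaxConsistent.chd (hX₀ : MaxConsistent X₀) (u : COutcome X₀ B) :
    MaxConsistent (chd u) :=
  hX₀.hdSeq u.2

theorem know_mem_hdSeq_iff (hX₀ : MaxConsistent X₀) {C : Set Agent} {l : List (Step Agent V B)}
    (hl : ValidSeq X₀ l) (hC : ∀ e ∈ l, C ⊆ e.1) (χ : Formula Agent V) :
    know C χ ∈ hdSeq X₀ l ↔ know C χ ∈ X₀ := by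
  induction l generalizing X₀ with
  | nil => rfl
  | cons e l ih =>
    obtain ⟨hY, hKY, hl⟩ := hl
    have hCe := hC e List.mem_cons_self
    rw [hdSeq, ih hY hl fun e' he' => hC e' (List.mem_cons_of_mem e he')]
    refine ⟨fun h => by_contra fun hn => ?_, fun h => hKY _ (hX₀.know_mem_of_subset hCe
      (hX₀.know_know_mem h))⟩
    exact hY.neg_mem_iff.1 (hKY _ (hX₀.know_mem_of_subset hCe (hX₀.know_neg_know_mem hn))) h

theorem csimC.exists_common_ancestor {C : Set Agent} {u v : COutcome X₀ B} (h : csimC C u v) :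
    ∃ w t t' : List (Step Agent V B), u.1 = w ++ t ∧ v.1 = w ++ t' ∧
      (∀ e ∈ t, C ⊆ e.1) ∧ (∀ e ∈ t', C ⊆ e.1) := by
  classical
  rcases C.eq_empty_or_nonempty with rfl | ⟨a, ha⟩
  · exact ⟨[], u.1, v.1, rfl, rfl, by simp, by simp⟩
  have hex : ∃ n, ∃ a ∈ C, ∃ w t t', u.1 = w ++ t ∧ v.1 = w ++ t' ∧
      (∀ e ∈ t, a ∈ e.1) ∧ (∀ e ∈ t', a ∈ e.1) ∧ t.length = n := by
    obtain ⟨w, t, t', hu, hv, ht, ht'⟩ := h a ha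
    exact ⟨_, a, ha, w, t, t', hu, hv, ht, ht', rfl⟩
  -- the ancestor with the shortest path down to `u` lies below all the others
  obtain ⟨-, -, w, t, t', hu, hv, -, -, hlen⟩ := Nat.find_spec hex
  have hbelow : ∀ b ∈ C, (∀ e ∈ t, b ∈ e.1) ∧ (∀ e ∈ t', b ∈ e.1) := by
    intro b hb
    obtain ⟨w₁, t₁, t₁', hu₁, hv₁, ht₁, ht₁'⟩ := h b hb
    have hle : t.length ≤ t₁.length :=
      hlen ▸ Nat.find_min' hex ⟨b, hb, w₁, t₁, t₁', hu₁, hv₁, ht₁, ht₁', rfl⟩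
    obtain ⟨m, rfl, rfl⟩ : ∃ m, w = w₁ ++ m ∧ t₁ = m ++ t := by
      rcases List.append_eq_append_iff.1 (hu.symm.trans hu₁) with ⟨m, hw₁, ht⟩ | ⟨m, hw, ht₁⟩
      · obtain rfl : m = [] := by
          rw [ht, List.length_append] at hle
          exact List.eq_nil_of_length_eq_zero (by omega)
        exact ⟨[], by simpa using hw₁.symm, by simpa using ht.symm⟩
      · exact ⟨m, hw, ht₁⟩
    obtain rfl : t₁' = m ++ t' := List.append_cancel_left (by rw [← hv₁, hv, List.append_assoc])
    exact ⟨fun e he => ht₁ e (List.mem_append_right m he),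
      fun e he => ht₁' e (List.mem_append_right m he)⟩
  exact ⟨w, t, t', hu, hv, fun e he b hb => (hbelow b hb).1 e he,
    fun e he b hb => (hbelow b hb).2 e he⟩

theorem know_mem_chd_iff_of_csimC (hX₀ : MaxConsistent X₀) {C : Set Agent}
    {u v : COutcome X₀ B} (h : csimC C u v) (χ : Formula Agent V) :
    know C χ ∈ chd u ↔ know C χ ∈ chd v := by
  obtain ⟨w, t, t', hu, hv, ht, ht'⟩ := h.exists_common_ancestor
  have hu₂ := u.2
  have hv₂ := v.2
  rw [hu, validSeq_append] at hu₂
  rw [hv, validSeq_append] at hv₂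
  have hw := hX₀.hdSeq hu₂.1
  rw [chd, chd, hu, hv, hdSeq_append, hdSeq_append, know_mem_hdSeq_iff hw hu₂.2 ht,
    know_mem_hdSeq_iff hw hv₂.2 ht']

theorem dknow_mem_chd_iff_of_csimC (hX₀ : MaxConsistent X₀) {C : Set Agent}
    {u v : COutcome X₀ B} (h : csimC C u v) (χ : Formula Agent V) :
    dknow C χ ∈ chd u ↔ dknow C χ ∈ chd v := by
  rw [(hX₀.chd u).dknow_mem_iff, (hX₀.chd v).dknow_mem_iff,
    know_mem_chd_iff_of_csimC hX₀ h]

def COutcome.child (ω : COutcome X₀ B) (C : Set Agent) (b : B) (Y : Set (Formula Agent V))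
    (hY : MaxConsistent Y) (hCY : ∀ χ, know C χ ∈ chd ω → χ ∈ Y) : COutcome X₀ B :=
  ⟨ω.1 ++ [(C, b, Y)], validSeq_append.2 ⟨ω.2, hY, hCY, trivial⟩⟩

namespace COutcome

variable (ω : COutcome X₀ B) (C : Set Agent) (b : B) {Y : Set (Formula Agent V)}
  (hY : MaxConsistent Y) (hCY : ∀ χ, know C χ ∈ chd ω → χ ∈ Y)

theorem chd_child : chd (ω.child C b Y hY hCY) = Y :=
  hdSeq_append X₀ ω.1 _

theorem csimC_child : csimC C ω (ω.child C b Y hY hCY) :=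
  fun _ ha => ⟨ω.1, [], [(C, b, Y)], (List.append_nil _).symm, rfl, by simp, by simpa using ha⟩

theorem csimA_of_csimA_child {a : Agent} {v : COutcome X₀ B}
    (h : csimA a (ω.child C b Y hY hCY) v) (hv : ¬ (ω.child C b Y hY hCY).1 <+: v.1) :
    a ∈ C ∧ csimA a ω v := by
  obtain ⟨w, t, t', hu, hv', ht, ht'⟩ := h
  change ω.1 ++ [(C, b, Y)] = w ++ t at hu
  change ¬ ω.1 ++ [(C, b, Y)] <+: v.1 at hv
  rcases List.eq_nil_or_concat t with rfl | ⟨t₀, e, rfl⟩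
  · exact absurd ⟨t', by rw [hu, List.append_nil, hv']⟩ hv
  · rw [List.concat_eq_append, ← List.append_assoc] at hu
    obtain ⟨hw, he⟩ := List.append_inj' hu.symm rfl
    obtain rfl : e = (C, b, Y) := by simpa using he
    exact ⟨ht (C, b, Y) (by simp), w, t₀, t', hw.symm, hv', fun e he => ht e (by simp [he]), ht'⟩

end COutcome

theorem COutcome.exists_child_not_prefix (hB : Cardinal.mk Agent < Cardinal.mk B)
    (ω : COutcome X₀ B) (C : Set Agent) {Y : Set (Formula Agent V)} (hY : MaxConsistent Y)
    (hCY : ∀ χ, know C χ ∈ chd ω → χ ∈ Y) (u : Agent → COutcome X₀ B) :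
    ∃ b, ∀ a, ¬ (ω.child C b Y hY hCY).1 <+: (u a).1 := by
  refine exists_forall_not_of_mk_lt hB _ fun a b b' h h' => ?_
  have heq := List.prefix_of_prefix_length_le h h' (by simp [child])
  simpa [child] using heq.eq_of_length (by simp [child])

/-- An action `(ψ, E, v)` whose players in `D` under `s` force `¬ψ`, by condition (ii) of `P`,
at a `C`-child of `ω`. -/
def IsThreat (ω : COutcome X₀ B) (s : Agent → CAct X₀ B) (C D : Set Agent)
    (r : CAct X₀ B) : Prop :=
  r.2.1 ⊆ C ∧ csimC r.2.1 ω r.2.2 ∧ dknow r.2.1 (blame r.2.1 (D ∩ s ⁻¹' {r}) r.1) ∈ chd r.2.2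

theorem COutcome.child_mem_CP (hX₀ : MaxConsistent X₀) {ω : COutcome X₀ B}
    {s : Agent → CAct X₀ B} {C D : Set Agent} [DecidablePred (· ∈ D)] {b : B}
    {Y : Set (Formula Agent V)} {hY : MaxConsistent Y} {hCY : ∀ χ, know C χ ∈ chd ω → χ ∈ Y}
    (hthreat : ∀ r, IsThreat ω s C D r → r.1.neg ∈ Y)
    (hfresh : ∀ a ∈ D, ¬ (ω.child C b Y hY hCY).1 <+: (s a).2.2.1)
    {c : CAct X₀ B} (hc : c.1.neg ∈ Y) :
    (ctoI (ω.child C b Y hY hCY), D.piecewise s fun _ => c, ω.child C b Y hY hCY) ∈ CP X₀ B := by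
  refine ⟨rfl, fun v E F ψ hK hδ hsim => ?_⟩
  change ψ.neg ∈ chd (ω.child C b Y hY hCY)
  rw [chd_child]
  obtain ⟨a, ha⟩ : F.Nonempty := Set.nonempty_iff_ne_empty.2 fun hF =>
    (hX₀.chd v).dknow_blame_empty_not_mem (hF ▸ hK)
  by_cases hFD : F ⊆ D
  · have hs : ∀ a ∈ F, s a = (ψ, E, v) := fun a ha =>
      (D.piecewise_eq_of_mem s (fun _ => c) (hFD ha)).symm.trans (hδ a ha)
    have hv : ¬ (ω.child C b Y hY hCY).1 <+: v.1 := by simpa [hs a ha] using hfresh a (hFD ha)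
    have hEC := fun a ha => ω.csimA_of_csimA_child C b hY hCY (hsim a ha) hv
    refine hthreat (ψ, E, v) ⟨fun a ha => (hEC a ha).1, fun a ha => (hEC a ha).2, ?_⟩
    exact (hX₀.chd v).dknow_blame_mem_mono (fun a ha => ⟨hFD ha, hs a ha⟩) hK
  · obtain ⟨a, haF, haD⟩ := Set.not_subset.1 hFD
    rw [(D.piecewise_eq_of_notMem s (fun _ => c) haD).symm.trans (hδ a haF)] at hc
    exact hc

end CanonicalGame

/-- Lemma 15: in the canonical game G(X₀), for any play (α,δ,ω) ∈ P,
    any formula ¬(φ → B_C^D φ) ∈ hd(ω), and any action profile s ∈ Δ^D, there is a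
    play (α',δ',ω') ∈ P with α ∼_C α', s =_D δ', and φ ∈ hd(ω'). -/
theorem B_child_exists {Agent V B : Type}
    (hB : Cardinal.mk Agent < Cardinal.mk B)
    (X₀ : Set (Formula Agent V)) (hX₀ : MaxConsistent X₀)
    (x : CPlay X₀ B) (hx : x ∈ CP X₀ B) (C D : Set Agent) (φ : Formula Agent V)
    (h : Formula.neg (φ.imp (Formula.blame C D φ)) ∈ chd x.2.2)
    (s : Agent → CAct X₀ B) :
    ∃ x' ∈ CP X₀ B, IsimC C x.1 x'.1 ∧ (∀ a ∈ D, s a = x'.2.1 a) ∧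
      φ ∈ chd x'.2.2 := by
  classical
  set ω := x.2.2
  let T := {r // IsThreat ω s C D r}
  have hdisj : Pairwise (Disjoint on fun r : T => D ∩ s ⁻¹' {r.1}) := fun r r' hne =>
    Set.disjoint_left.2 fun a ha ha' => hne (Subtype.ext (ha.2.symm.trans ha'.2))
  obtain ⟨Y, hΓY, hY⟩ := lindenbaum ((hX₀.chd ω).consistent_insert_range_neg h
    (ψ := fun r : T => r.1.1) (fun r => r.2.1) (fun _ => Set.inter_subset_left) hdisj
    fun r => (dknow_mem_chd_iff_of_csimC hX₀ r.2.2.1 _).2 r.2.2.2)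
  have hCY : ∀ χ, know C χ ∈ chd ω → χ ∈ Y := fun χ hχ =>
    hΓY (Set.mem_insert_of_mem _ (.inl hχ))
  obtain ⟨b, hb⟩ := ω.exists_child_not_prefix hB C hY hCY fun a => (s a).2.2
  let c : CAct X₀ B := ((φ.imp φ).neg, ∅, ω)
  have hc : c.1.neg ∈ Y :=
    hY.mem_of_provable (Provable.taut fun v hv => by simp only [c, hv.1, hv.2]; tauto)
  have hCP := ω.child_mem_CP hX₀ (b := b) (hCY := hCY)
    (fun r hr => hΓY (Set.mem_insert_of_mem _ (.inr ⟨⟨r, hr⟩, rfl⟩))) (fun a _ => hb a) hc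
  refine ⟨_, hCP, ⟨ω, _, hx.1, rfl, ω.csimC_child C b hY hCY⟩,
    fun a ha => (D.piecewise_eq_of_mem s (fun _ => c) ha).symm, ?_⟩
  exact (ω.chd_child C b hY hCY).symm ▸ hΓY (Set.mem_insert φ _)

end DutyToWarn
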